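/- arXiv:math/0603424 — 4 statements merged into one kernel-verified Lean document; each statement's English description precedes it below -/
import Mathlib

section
/- The function φ₆(p,q) = p·q²/(1 + p²) + arctan(p) satisfies the equation (1 + p²)φ_pp + 2pq·φ_pq + (1 + q²)φ_qq = 0 for all real p, q. -/
noncomputable def pd₁ (f : ℝ → ℝ → ℝ) : ℝ → ℝ → ℝ := fun p q => deriv (fun x => f x q) p
noncomputable def pd₂ (f : ℝ → ℝ → ℝ) : ℝ → ℝ → ℝ := fun p q => deriv (fun y => f p y) q

/-!
Write `φ(p, q) = g(p) q² + arctan p` with `g(p) = p / (1 + p²)`. Functions of the form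
`g(p) k(q) + h(p)` are closed under both partial derivatives, so the Legendre operator applied
to `φ` is `q² ((1 + p²) g'' + 4 p g' + 2 g) + ((1 + p²) arctan'' + 2 g)`. The first
coefficient is `((1 + p²) g)'' = p'' = 0`, and the second vanishes because
`(1 + p²) arctan'' = -2p / (1 + p²) = -2 g`.
-/

open Real

def sepAdd (g k h : ℝ → ℝ) : ℝ → ℝ → ℝ := fun a b => g a * k b + h a

section sepAdd

variable {g g' k k' h h' : ℝ → ℝ}

theorem pd₁_sepAdd (hg : ∀ a, HasDerivAt g (g' a) a) (hh : ∀ a, HasDerivAt h (h' a) a) :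
    pd₁ (sepAdd g k h) = sepAdd g' k h' :=
  funext₂ fun a b => (((hg a).mul_const (k b)).add (hh a)).deriv

theorem pd₂_sepAdd (hk : ∀ b, HasDerivAt k (k' b) b) :
    pd₂ (sepAdd g k h) = sepAdd g k' fun _ => 0 :=
  funext₂ fun a b => (((hk b).const_mul (g a)).add_const (h a)).deriv.trans (add_zero _).symm

end sepAdd

theorem hasDerivAt_one_add_sq (x : ℝ) : HasDerivAt (fun a => 1 + a ^ 2) (2 * x) x := by
  simpa using (hasDerivAt_pow 2 x).const_add 1

theorem hasDerivAt_div_one_add_sq (x : ℝ) :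
    HasDerivAt (fun a => a / (1 + a ^ 2)) ((1 - x ^ 2) / (1 + x ^ 2) ^ 2) x := by
  refine ((hasDerivAt_id x).div (hasDerivAt_one_add_sq x) (by positivity)).congr_deriv ?_
  simp only [id]
  ring

theorem hasDerivAt_one_sub_sq_div (x : ℝ) :
    HasDerivAt (fun a => (1 - a ^ 2) / (1 + a ^ 2) ^ 2)
      (2 * x * (x ^ 2 - 3) / (1 + x ^ 2) ^ 3) x := by
  have hnum : HasDerivAt (fun a => 1 - a ^ 2) (-(2 * x)) x := by
    simpa using (hasDerivAt_pow 2 x).const_sub 1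
  have hden : HasDerivAt (fun a => (1 + a ^ 2) ^ 2) (2 * (1 + x ^ 2) * (2 * x)) x :=
    ((hasDerivAt_one_add_sq x).pow 2).congr_deriv (by ring)
  refine (hnum.div hden (by positivity)).congr_deriv ?_
  field_simp
  ring

theorem hasDerivAt_one_div_one_add_sq (x : ℝ) :
    HasDerivAt (fun a => 1 / (1 + a ^ 2)) (-(2 * x) / (1 + x ^ 2) ^ 2) x := by
  refine ((hasDerivAt_const x (1 : ℝ)).div (hasDerivAt_one_add_sq x)
    (by positivity)).congr_deriv ?_
  ring

theorem phi_solves_legendre_eq :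
    ∀ p q : ℝ,
      (1 + p ^ 2) * pd₁ (pd₁ (fun a b => a * b ^ 2 / (1 + a ^ 2) + Real.arctan a)) p q
        + 2 * p * q * pd₁ (pd₂ (fun a b => a * b ^ 2 / (1 + a ^ 2) + Real.arctan a)) p q
        + (1 + q ^ 2) * pd₂ (pd₂ (fun a b => a * b ^ 2 / (1 + a ^ 2) + Real.arctan a)) p q = 0 := by
  intro p q
  have hφ : (fun a b => a * b ^ 2 / (1 + a ^ 2) + arctan a)
      = sepAdd (fun a => a / (1 + a ^ 2)) (· ^ 2) arctan :=
    funext₂ fun a b => by rw [sepAdd, mul_div_right_comm]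
  have hsq : ∀ b : ℝ, HasDerivAt (· ^ 2) (2 * b) b := fun b => by
    simpa using hasDerivAt_pow 2 b
  have hlin : ∀ b : ℝ, HasDerivAt (fun b => 2 * b) 2 b := fun b => by
    simpa using (hasDerivAt_id b).const_mul 2
  rw [hφ, pd₁_sepAdd hasDerivAt_div_one_add_sq hasDerivAt_arctan,
    pd₁_sepAdd hasDerivAt_one_sub_sq_div hasDerivAt_one_div_one_add_sq, pd₂_sepAdd hsq,
    pd₁_sepAdd hasDerivAt_div_one_add_sq fun a => hasDerivAt_const a 0, pd₂_sepAdd hlin]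
  simp only [sepAdd]
  field_simp
  ring
end

section
/- Let u : ℝ² → ℝ be a twice continuously differentiable solution of the minimal surface equation (1 + u_y²)u_xx − 2u_x u_y u_xy + (1 + u_x²)u_yy = 0 on a connected open set. Suppose there is a continuously differentiable function f : ℝ → ℝ such that u_y = f(u_x) everywhere on this set. Then u_x and u_y are constant, i.e., the graph of u is a plane. -/
/-! With `p = u_x`, `q = u_y = f(p)` and `c = f'(p)`, the chain rule and the symmetry of the
Hessian give `u_xy = c u_xx` and `u_yy = c² u_xx`, so the minimal surface equation reads
`u_xx (1 + c² + (q - p c)²) = 0`. Hence `u_xx = u_xy = 0`: the gradient of `p` vanishes, `p` is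
constant on the connected open set, and so is `q = f(p)`. -/

open Function Filter Topology

section PartialDerivatives

variable {g : ℝ → ℝ → ℝ} {z : ℝ × ℝ}

lemma pd₁_eq_fderiv_apply (h : DifferentiableAt ℝ (uncurry g) z) :
    pd₁ g z.1 z.2 = fderiv ℝ (uncurry g) z (1, 0) :=
  have hline : HasDerivAt (fun x => (x, z.2)) (1, 0) z.1 :=
    (hasDerivAt_id z.1).prodMk (hasDerivAt_const z.1 z.2)
  (h.hasFDerivAt.comp_hasDerivAt_of_eq _ hline rfl).deriv

lemma pd₂_eq_fderiv_apply (h : DifferentiableAt ℝ (uncurry g) z) :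
    pd₂ g z.1 z.2 = fderiv ℝ (uncurry g) z (0, 1) :=
  have hline : HasDerivAt (fun y => (z.1, y)) (0, 1) z.2 :=
    (hasDerivAt_const z.2 z.1).prodMk (hasDerivAt_id z.2)
  (h.hasFDerivAt.comp_hasDerivAt_of_eq _ hline rfl).deriv

lemma fderiv_eq_zero_of_pd₁_of_pd₂ (h : DifferentiableAt ℝ (uncurry g) z)
    (h₁ : pd₁ g z.1 z.2 = 0) (h₂ : pd₂ g z.1 z.2 = 0) : fderiv ℝ (uncurry g) z = 0 := by
  rw [pd₁_eq_fderiv_apply h] at h₁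
  rw [pd₂_eq_fderiv_apply h] at h₂
  ext
  · simpa using h₁
  · simpa using h₂

variable {s : Set (ℝ × ℝ)} {n : WithTop ℕ∞}

lemma uncurry_pd₁_eqOn (hg : DifferentiableOn ℝ (uncurry g) s) (hs : IsOpen s) :
    s.EqOn (uncurry (pd₁ g)) fun w => fderiv ℝ (uncurry g) w (1, 0) :=
  fun _ hw => pd₁_eq_fderiv_apply (hg.differentiableAt (hs.mem_nhds hw))

lemma uncurry_pd₂_eqOn (hg : DifferentiableOn ℝ (uncurry g) s) (hs : IsOpen s) :
    s.EqOn (uncurry (pd₂ g)) fun w => fderiv ℝ (uncurry g) w (0, 1) :=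
  fun _ hw => pd₂_eq_fderiv_apply (hg.differentiableAt (hs.mem_nhds hw))

lemma ContDiffOn.uncurry_pd₁ (hg : ContDiffOn ℝ (n + 1) (uncurry g) s) (hs : IsOpen s) :
    ContDiffOn ℝ n (uncurry (pd₁ g)) s :=
  ((hg.fderiv_of_isOpen hs le_rfl).clm_apply contDiffOn_const).congr
    (uncurry_pd₁_eqOn (hg.differentiableOn (by simp)) hs)

lemma ContDiffOn.uncurry_pd₂ (hg : ContDiffOn ℝ (n + 1) (uncurry g) s) (hs : IsOpen s) :
    ContDiffOn ℝ n (uncurry (pd₂ g)) s :=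
  ((hg.fderiv_of_isOpen hs le_rfl).clm_apply contDiffOn_const).congr
    (uncurry_pd₂_eqOn (hg.differentiableOn (by simp)) hs)

lemma pd₂_pd₁_eq_pd₁_pd₂ (hg : ContDiffOn ℝ 2 (uncurry g) s) (hs : IsOpen s) (hz : z ∈ s) :
    pd₂ (pd₁ g) z.1 z.2 = pd₁ (pd₂ g) z.1 z.2 := by
  have hU : ContDiffAt ℝ 2 (uncurry g) z := hg.contDiffAt (hs.mem_nhds hz)
  have hD : DifferentiableAt ℝ (fderiv ℝ (uncurry g)) z :=
    (hU.fderiv_right (m := 1) le_rfl).differentiableAt one_ne_zero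
  have hg' : DifferentiableOn ℝ (uncurry g) s := hg.differentiableOn two_ne_zero
  rw [pd₂_eq_fderiv_apply ((hg.uncurry_pd₁ (n := 1) hs).differentiableOn one_ne_zero
      |>.differentiableAt (hs.mem_nhds hz)),
    pd₁_eq_fderiv_apply ((hg.uncurry_pd₂ (n := 1) hs).differentiableOn one_ne_zero
      |>.differentiableAt (hs.mem_nhds hz)),
    ((uncurry_pd₁_eqOn hg' hs).eventuallyEq_of_mem (hs.mem_nhds hz)).fderiv_eq,
    ((uncurry_pd₂_eqOn hg' hs).eventuallyEq_of_mem (hs.mem_nhds hz)).fderiv_eq,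
    fderiv_clm_apply hD (differentiableAt_const _), fderiv_clm_apply hD (differentiableAt_const _)]
  simpa using hU.isSymmSndFDerivAt (by simp) (0, 1) (1, 0)

end PartialDerivatives

lemma fderiv_apply_eq_deriv_mul_of_eventuallyEq_comp {𝕜 E : Type*} [NontriviallyNormedField 𝕜]
    [NormedAddCommGroup E] [NormedSpace 𝕜 E] {G H : E → 𝕜} {f : 𝕜 → 𝕜} {x : E}
    (hH : H =ᶠ[𝓝 x] f ∘ G) (hf : DifferentiableAt 𝕜 f (G x)) (hG : DifferentiableAt 𝕜 G x)
    (v : E) : fderiv 𝕜 H x v = deriv f (G x) * fderiv 𝕜 G x v := by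
  rw [hH.fderiv_eq, (hf.hasDerivAt.comp_hasFDerivAt x hG.hasFDerivAt).fderiv]
  rfl

/-- The symbol `(1 + q²) ξ² - 2 p q ξ η + (1 + p²) η²` of the minimal surface operator at
`(ξ, η) = (1, c)`; it equals `1 + c² + (q - p c)²`. -/
lemma minimal_surface_symbol_pos (p q c : ℝ) :
    0 < (1 + q ^ 2) - 2 * p * q * c + (1 + p ^ 2) * c ^ 2 := by
  nlinarith [sq_nonneg c, sq_nonneg (q - p * c)]

lemma fderiv_uncurry_pd₁_eq_zero {s : Set (ℝ × ℝ)} (hs : IsOpen s) {u : ℝ → ℝ → ℝ}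
    (hu : ContDiffOn ℝ 2 (uncurry u) s) {z : ℝ × ℝ} (hz : z ∈ s)
    (hPDE : (1 + pd₂ u z.1 z.2 ^ 2) * pd₁ (pd₁ u) z.1 z.2
        - 2 * pd₁ u z.1 z.2 * pd₂ u z.1 z.2 * pd₁ (pd₂ u) z.1 z.2
        + (1 + pd₁ u z.1 z.2 ^ 2) * pd₂ (pd₂ u) z.1 z.2 = 0)
    {f : ℝ → ℝ} (hf : DifferentiableAt ℝ f (pd₁ u z.1 z.2))
    (hconstraint : ∀ w ∈ s, pd₂ u w.1 w.2 = f (pd₁ u w.1 w.2)) :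
    fderiv ℝ (uncurry (pd₁ u)) z = 0 := by
  have hp : DifferentiableAt ℝ (uncurry (pd₁ u)) z :=
    ((hu.uncurry_pd₁ (n := 1) hs).differentiableOn one_ne_zero).differentiableAt (hs.mem_nhds hz)
  have hq : DifferentiableAt ℝ (uncurry (pd₂ u)) z :=
    ((hu.uncurry_pd₂ (n := 1) hs).differentiableOn one_ne_zero).differentiableAt (hs.mem_nhds hz)
  have hqp : uncurry (pd₂ u) =ᶠ[𝓝 z] f ∘ uncurry (pd₁ u) :=
    eventually_of_mem (hs.mem_nhds hz) hconstraint
  set c := deriv f (pd₁ u z.1 z.2)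
  have hxy : pd₁ (pd₂ u) z.1 z.2 = c * pd₁ (pd₁ u) z.1 z.2 := by
    rw [pd₁_eq_fderiv_apply hq, pd₁_eq_fderiv_apply hp,
      fderiv_apply_eq_deriv_mul_of_eventuallyEq_comp hqp hf hp]
    rfl
  have hyy : pd₂ (pd₂ u) z.1 z.2 = c * pd₂ (pd₁ u) z.1 z.2 := by
    rw [pd₂_eq_fderiv_apply hq, pd₂_eq_fderiv_apply hp,
      fderiv_apply_eq_deriv_mul_of_eventuallyEq_comp hqp hf hp]
    rfl
  have hyx : pd₂ (pd₁ u) z.1 z.2 = c * pd₁ (pd₁ u) z.1 z.2 := by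
    rw [pd₂_pd₁_eq_pd₁_pd₂ hu hs hz, hxy]
  have hxx : pd₁ (pd₁ u) z.1 z.2 = 0 := by
    rw [hyy, hyx, hxy, hconstraint z hz] at hPDE
    refine (mul_eq_zero.1 ?_).resolve_right (minimal_surface_symbol_pos (pd₁ u z.1 z.2)
      (f (pd₁ u z.1 z.2)) c).ne'
    linear_combination hPDE
  exact fderiv_eq_zero_of_pd₁_of_pd₂ hp hxx (by rw [hyx, hxx, mul_zero])

theorem invariant_minimal_surface_is_plane
    (s : Set (ℝ × ℝ)) (hs : IsOpen s) (hconn : IsConnected s)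
    (u : ℝ → ℝ → ℝ) (hu : ContDiffOn ℝ 2 (fun z : ℝ × ℝ => u z.1 z.2) s)
    (hPDE : ∀ z ∈ s,
      (1 + pd₂ u z.1 z.2 ^ 2) * pd₁ (pd₁ u) z.1 z.2
        - 2 * pd₁ u z.1 z.2 * pd₂ u z.1 z.2 * pd₁ (pd₂ u) z.1 z.2
        + (1 + pd₁ u z.1 z.2 ^ 2) * pd₂ (pd₂ u) z.1 z.2 = 0)
    (f : ℝ → ℝ) (hf : ContDiff ℝ 1 f)
    (hconstraint : ∀ z ∈ s, pd₂ u z.1 z.2 = f (pd₁ u z.1 z.2)) :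
    ∃ c₁ c₂ : ℝ, ∀ z ∈ s, pd₁ u z.1 z.2 = c₁ ∧ pd₂ u z.1 z.2 = c₂ := by
  have hp : DifferentiableOn ℝ (uncurry (pd₁ u)) s :=
    (ContDiffOn.uncurry_pd₁ (n := 1) hu hs).differentiableOn one_ne_zero
  obtain ⟨c, hc⟩ := hs.exists_is_const_of_fderiv_eq_zero hconn.isPreconnected hp fun z hz =>
    fderiv_uncurry_pd₁_eq_zero hs hu hz (hPDE z hz) (hf.differentiable one_ne_zero _) hconstraint
  exact ⟨c, f c, fun z hz => ⟨hc z hz, (hconstraint z hz).trans (congrArg f (hc z hz))⟩⟩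
end

section
/- If φ(p,q) is a twice differentiable solution of the equation (1 + p²)φ_pp + 2pq·φ_pq + (1 + q²)φ_qq = 0 on ℝ², then the function ψ(p,q) = p·φ_q(p,q) − q·φ_p(p,q) is also a solution of the same equation. -/
/-!
The rotation generator `R = p ∂_q - q ∂_p` commutes with the operator
`L = (1 + p²) ∂_p² + 2pq ∂_p∂_q + (1 + q²) ∂_q²`. Indeed `[∂_p, R] = ∂_q` and `[∂_q, R] = -∂_p`,
while `[∂_p, L] = 2p ∂_p² + 2q ∂_p∂_q` and `[∂_q, L] = 2p ∂_p∂_q + 2q ∂_q²`; expanding `L (R φ)`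
and `R (L φ)` with these rules, the two agree up to the symmetry of mixed partials of order
three. Hence `L (R φ) = R (L φ) = R 0 = 0`.
-/

open Function

section PartialDerivatives

variable {f g : ℝ → ℝ → ℝ}

theorem hasDerivAt_fderiv_fst {p q : ℝ} (hf : DifferentiableAt ℝ (uncurry f) (p, q)) :
    HasDerivAt (fun x => f x q) (fderiv ℝ (uncurry f) (p, q) (1, 0)) p :=
  hf.hasFDerivAt.comp_hasDerivAt (f := fun x => (x, q)) p
    ((hasDerivAt_id p).prodMk (hasDerivAt_const p q))

theorem hasDerivAt_fderiv_snd {p q : ℝ} (hf : DifferentiableAt ℝ (uncurry f) (p, q)) :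
    HasDerivAt (fun y => f p y) (fderiv ℝ (uncurry f) (p, q) (0, 1)) q :=
  hf.hasFDerivAt.comp_hasDerivAt (f := fun y => (p, y)) q
    ((hasDerivAt_const q p).prodMk (hasDerivAt_id q))

theorem uncurry_pd₁_eq_fderiv (hf : Differentiable ℝ (uncurry f)) :
    uncurry (pd₁ f) = fun z => fderiv ℝ (uncurry f) z (1, 0) :=
  funext fun z => (hasDerivAt_fderiv_fst (hf z)).deriv

theorem uncurry_pd₂_eq_fderiv (hf : Differentiable ℝ (uncurry f)) :
    uncurry (pd₂ f) = fun z => fderiv ℝ (uncurry f) z (0, 1) :=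
  funext fun z => (hasDerivAt_fderiv_snd (hf z)).deriv

theorem Differentiable.hasDerivAt_pd₁ (hf : Differentiable ℝ (uncurry f)) (p q : ℝ) :
    HasDerivAt (fun x => f x q) (pd₁ f p q) p :=
  (hasDerivAt_fderiv_fst (hf (p, q))).differentiableAt.hasDerivAt

theorem Differentiable.hasDerivAt_pd₂ (hf : Differentiable ℝ (uncurry f)) (p q : ℝ) :
    HasDerivAt (fun y => f p y) (pd₂ f p q) q :=
  (hasDerivAt_fderiv_snd (hf (p, q))).differentiableAt.hasDerivAt

theorem ContDiff.uncurry_pd₁ {n : ℕ} (hf : ContDiff ℝ (n + 1) (uncurry f)) :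
    ContDiff ℝ n (uncurry (pd₁ f)) := by
  rw [uncurry_pd₁_eq_fderiv (hf.differentiable (by simp))]
  exact (hf.fderiv_right le_rfl).clm_apply contDiff_const

theorem ContDiff.uncurry_pd₂ {n : ℕ} (hf : ContDiff ℝ (n + 1) (uncurry f)) :
    ContDiff ℝ n (uncurry (pd₂ f)) := by
  rw [uncurry_pd₂_eq_fderiv (hf.differentiable (by simp))]
  exact (hf.fderiv_right le_rfl).clm_apply contDiff_const

theorem pd₁_pd₂_comm (hf : ContDiff ℝ 2 (uncurry f)) : pd₁ (pd₂ f) = pd₂ (pd₁ f) := by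
  have hf' : Differentiable ℝ (fderiv ℝ (uncurry f)) :=
    (hf.fderiv_right (m := 1) le_rfl).differentiable one_ne_zero
  have hd : Differentiable ℝ (uncurry f) := hf.differentiable two_ne_zero
  have fderiv_apply_eq : ∀ v w z, fderiv ℝ (fun z => fderiv ℝ (uncurry f) z w) z v
      = fderiv ℝ (fderiv ℝ (uncurry f)) z v w := fun v w z => by
    rw [fderiv_clm_apply (hf' z) (differentiableAt_const w)]
    simp
  ext p q
  have hsymm := (hf.contDiffAt (x := (p, q))).isSymmSndFDerivAt (by simp) (1, 0) (0, 1)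
  rw [← uncurry_apply_pair (pd₁ _), ← uncurry_apply_pair (pd₂ (pd₁ f)),
    uncurry_pd₁_eq_fderiv (hf.uncurry_pd₂.differentiable one_ne_zero),
    uncurry_pd₂_eq_fderiv (hf.uncurry_pd₁.differentiable one_ne_zero), uncurry_pd₂_eq_fderiv hd,
    uncurry_pd₁_eq_fderiv hd]
  dsimp only
  rw [fderiv_apply_eq, fderiv_apply_eq, hsymm]

theorem pd₁_add (hf : Differentiable ℝ (uncurry f)) (hg : Differentiable ℝ (uncurry g)) :
    pd₁ (fun p q => f p q + g p q) = fun p q => pd₁ f p q + pd₁ g p q :=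
  funext₂ fun p q => ((hf.hasDerivAt_pd₁ p q).add (hg.hasDerivAt_pd₁ p q)).deriv

theorem pd₁_sub (hf : Differentiable ℝ (uncurry f)) (hg : Differentiable ℝ (uncurry g)) :
    pd₁ (fun p q => f p q - g p q) = fun p q => pd₁ f p q - pd₁ g p q :=
  funext₂ fun p q => ((hf.hasDerivAt_pd₁ p q).sub (hg.hasDerivAt_pd₁ p q)).deriv

theorem pd₂_sub (hf : Differentiable ℝ (uncurry f)) (hg : Differentiable ℝ (uncurry g)) :
    pd₂ (fun p q => f p q - g p q) = fun p q => pd₂ f p q - pd₂ g p q :=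
  funext₂ fun p q => ((hf.hasDerivAt_pd₂ p q).sub (hg.hasDerivAt_pd₂ p q)).deriv

end PartialDerivatives

noncomputable def rotationOp (f : ℝ → ℝ → ℝ) : ℝ → ℝ → ℝ :=
  fun p q => p * pd₂ f p q - q * pd₁ f p q

noncomputable def legendreMinimalSurfaceOp (f : ℝ → ℝ → ℝ) : ℝ → ℝ → ℝ :=
  fun p q => (1 + p ^ 2) * pd₁ (pd₁ f) p q + 2 * p * q * pd₁ (pd₂ f) p q
    + (1 + q ^ 2) * pd₂ (pd₂ f) p q

section Operators

variable {f : ℝ → ℝ → ℝ}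

theorem rotationOp_zero : rotationOp 0 = 0 := by
  ext p q
  simp [rotationOp, pd₁, pd₂]

theorem ContDiff.uncurry_rotationOp {n : ℕ} (hf : ContDiff ℝ (n + 1) (uncurry f)) :
    ContDiff ℝ n (uncurry (rotationOp f)) :=
  (contDiff_fst.mul hf.uncurry_pd₂).sub (contDiff_snd.mul hf.uncurry_pd₁)

theorem pd₁_rotationOp (hf : ContDiff ℝ 2 (uncurry f)) :
    pd₁ (rotationOp f) = fun p q => pd₂ f p q + rotationOp (pd₁ f) p q := by
  have h₁ := (hf.uncurry_pd₁ (n := 1)).differentiable one_ne_zero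
  have h₂ := (hf.uncurry_pd₂ (n := 1)).differentiable one_ne_zero
  refine funext₂ fun p q => (((hasDerivAt_id p).mul (h₂.hasDerivAt_pd₁ p q)).sub
    ((h₁.hasDerivAt_pd₁ p q).const_mul q)).deriv.trans ?_
  rw [rotationOp, pd₁_pd₂_comm hf, id]
  ring

theorem pd₂_rotationOp (hf : ContDiff ℝ 2 (uncurry f)) :
    pd₂ (rotationOp f) = fun p q => rotationOp (pd₂ f) p q - pd₁ f p q := by
  have h₁ := (hf.uncurry_pd₁ (n := 1)).differentiable one_ne_zero
  have h₂ := (hf.uncurry_pd₂ (n := 1)).differentiable one_ne_zero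
  refine funext₂ fun p q => (((h₂.hasDerivAt_pd₂ p q).const_mul p).sub
    ((hasDerivAt_id q).mul (h₁.hasDerivAt_pd₂ p q))).deriv.trans ?_
  rw [rotationOp, pd₁_pd₂_comm hf, id]
  ring

theorem pd₁_legendreMinimalSurfaceOp (hf : ContDiff ℝ 3 (uncurry f)) :
    pd₁ (legendreMinimalSurfaceOp f) = fun p q => legendreMinimalSurfaceOp (pd₁ f) p q
      + 2 * p * pd₁ (pd₁ f) p q + 2 * q * pd₁ (pd₂ f) p q := by
  have h₁ := hf.uncurry_pd₁ (n := 2)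
  have h₂ := hf.uncurry_pd₂ (n := 2)
  have h₁₁ := (h₁.uncurry_pd₁ (n := 1)).differentiable one_ne_zero
  have h₁₂ := (h₂.uncurry_pd₁ (n := 1)).differentiable one_ne_zero
  have h₂₂ := (h₂.uncurry_pd₂ (n := 1)).differentiable one_ne_zero
  refine funext₂ fun p q => (((((hasDerivAt_pow 2 p).const_add 1).mul
    (h₁₁.hasDerivAt_pd₁ p q)).add ((((hasDerivAt_id p).const_mul 2).mul_const q).mul
    (h₁₂.hasDerivAt_pd₁ p q))).add ((h₂₂.hasDerivAt_pd₁ p q).const_mul (1 + q ^ 2))).deriv.trans ?_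
  simp only [legendreMinimalSurfaceOp, pd₁_pd₂_comm (hf.of_le (by norm_num)), pd₁_pd₂_comm h₁,
    pd₁_pd₂_comm h₂, id]
  ring

theorem pd₂_legendreMinimalSurfaceOp (hf : ContDiff ℝ 3 (uncurry f)) :
    pd₂ (legendreMinimalSurfaceOp f) = fun p q => legendreMinimalSurfaceOp (pd₂ f) p q
      + 2 * p * pd₁ (pd₂ f) p q + 2 * q * pd₂ (pd₂ f) p q := by
  have h₁ := hf.uncurry_pd₁ (n := 2)
  have h₂ := hf.uncurry_pd₂ (n := 2)
  have h₁₁ := (h₁.uncurry_pd₁ (n := 1)).differentiable one_ne_zero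
  have h₁₂ := (h₂.uncurry_pd₁ (n := 1)).differentiable one_ne_zero
  have h₂₂ := (h₂.uncurry_pd₂ (n := 1)).differentiable one_ne_zero
  refine funext₂ fun p q => ((((h₁₁.hasDerivAt_pd₂ p q).const_mul (1 + p ^ 2)).add
    (((hasDerivAt_id q).const_mul (2 * p)).mul (h₁₂.hasDerivAt_pd₂ p q))).add
    (((hasDerivAt_pow 2 q).const_add 1).mul (h₂₂.hasDerivAt_pd₂ p q))).deriv.trans ?_
  simp only [legendreMinimalSurfaceOp, pd₁_pd₂_comm (hf.of_le (by norm_num)), pd₁_pd₂_comm h₁,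
    pd₁_pd₂_comm h₂, id]
  ring

theorem legendreMinimalSurfaceOp_rotationOp (hf : ContDiff ℝ 3 (uncurry f)) :
    legendreMinimalSurfaceOp (rotationOp f) = rotationOp (legendreMinimalSurfaceOp f) := by
  have hf₂ : ContDiff ℝ 2 (uncurry f) := hf.of_le (by norm_num)
  have h₁ := hf.uncurry_pd₁ (n := 2)
  have h₂ := hf.uncurry_pd₂ (n := 2)
  have d₁ := (hf₂.uncurry_pd₁ (n := 1)).differentiable one_ne_zero
  have d₂ := (hf₂.uncurry_pd₂ (n := 1)).differentiable one_ne_zero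
  have dR₁ := (h₁.uncurry_rotationOp (n := 1)).differentiable one_ne_zero
  have dR₂ := (h₂.uncurry_rotationOp (n := 1)).differentiable one_ne_zero
  ext p q
  conv_rhs => rw [rotationOp, pd₁_legendreMinimalSurfaceOp hf, pd₂_legendreMinimalSurfaceOp hf]
  rw [legendreMinimalSurfaceOp, pd₁_rotationOp hf₂, pd₂_rotationOp hf₂, pd₁_add d₂ dR₁,
    pd₁_sub dR₂ d₁, pd₂_sub dR₂ d₁, pd₁_rotationOp h₁, pd₁_rotationOp h₂, pd₂_rotationOp h₂]
  simp only [rotationOp, legendreMinimalSurfaceOp, pd₁_pd₂_comm hf₂, pd₁_pd₂_comm h₁,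
    pd₁_pd₂_comm h₂]
  ring

end Operators

theorem recursion_preserves_solutions
    (φ : ℝ → ℝ → ℝ) (hφ : ContDiff ℝ 3 (fun z : ℝ × ℝ => φ z.1 z.2))
    (hsol : ∀ p q : ℝ,
      (1 + p ^ 2) * pd₁ (pd₁ φ) p q + 2 * p * q * pd₁ (pd₂ φ) p q
        + (1 + q ^ 2) * pd₂ (pd₂ φ) p q = 0) :
    ∀ p q : ℝ,
      (1 + p ^ 2) * pd₁ (pd₁ (fun p q => p * pd₂ φ p q - q * pd₁ φ p q)) p q
        + 2 * p * q * pd₁ (pd₂ (fun p q => p * pd₂ φ p q - q * pd₁ φ p q)) p q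
        + (1 + q ^ 2) * pd₂ (pd₂ (fun p q => p * pd₂ φ p q - q * pd₁ φ p q)) p q = 0 := by
  have hLφ : legendreMinimalSurfaceOp φ = 0 := funext₂ hsol
  intro p q
  calc _ = legendreMinimalSurfaceOp (rotationOp φ) p q := rfl
    _ = rotationOp (legendreMinimalSurfaceOp φ) p q := by
      rw [legendreMinimalSurfaceOp_rotationOp (f := φ) hφ]
    _ = 0 := by rw [hLφ, rotationOp_zero, Pi.zero_apply, Pi.zero_apply]
end

section
/- Applying the operator R₁ : φ ↦ −p·φ + (1 + p²)·φ_p + pq·φ_q to φ₆(p,q) = p·q²/(1+p²) + arctan(p) yields φ₇(p,q) = q²/(1 + p²) − p·arctan(p) plus 1, i.e., R₁(φ₆)(p,q) = q²/(1+p²) − p·arctan(p) + 1 for all real p, q. -/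
theorem R₁_phi6_eq_phi7_plus_one :
    ∀ p q : ℝ,
      -p * (p * q ^ 2 / (1 + p ^ 2) + Real.arctan p)
        + (1 + p ^ 2) * pd₁ (fun a b => a * b ^ 2 / (1 + a ^ 2) + Real.arctan a) p q
        + p * q * pd₂ (fun a b => a * b ^ 2 / (1 + a ^ 2) + Real.arctan a) p q
      = q ^ 2 / (1 + p ^ 2) - p * Real.arctan p + 1 := by
  intro p q
  have hne : (1 : ℝ) + p ^ 2 ≠ 0 := by positivity
  have h1 : pd₁ (fun a b => a * b ^ 2 / (1 + a ^ 2) + Real.arctan a) p q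
      = (q ^ 2 * (1 + p ^ 2) - p * q ^ 2 * (2 * p)) / (1 + p ^ 2) ^ 2 + 1 / (1 + p ^ 2) := by
    have h : HasDerivAt (fun x : ℝ => x * q ^ 2 / (1 + x ^ 2) + Real.arctan x)
        ((q ^ 2 * (1 + p ^ 2) - p * q ^ 2 * (2 * p)) / (1 + p ^ 2) ^ 2 + 1 / (1 + p ^ 2)) p := by
      have hnum : HasDerivAt (fun x : ℝ => x * q ^ 2) (q ^ 2) p := by
        simpa using (hasDerivAt_id p).mul_const (q ^ 2)
      have hden : HasDerivAt (fun x : ℝ => 1 + x ^ 2) (2 * p) p := by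
        simpa using ((hasDerivAt_pow 2 p).const_add 1)
      exact (hnum.div hden hne).add (Real.hasDerivAt_arctan p)
    exact h.deriv
  have h2 : pd₂ (fun a b => a * b ^ 2 / (1 + a ^ 2) + Real.arctan a) p q
      = p * (2 * q) / (1 + p ^ 2) := by
    have h' : HasDerivAt (fun y : ℝ => p * y ^ 2 / (1 + p ^ 2) + Real.arctan p)
        (p * (2 * q) / (1 + p ^ 2)) q := by
      have : HasDerivAt (fun y : ℝ => p * y ^ 2) (p * (2 * q)) q := by
        simpa [mul_comm] using ((hasDerivAt_pow 2 q).const_mul p)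
      simpa using (this.div_const (1 + p ^ 2)).add_const (Real.arctan p)
    exact h'.deriv
  rw [h1, h2]
  field_simp
  ring
end
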